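/- arXiv:1407.2802 — 10 statements merged into one kernel-verified Lean document; each statement's English description precedes it below -/
import Mathlib

section
/- Let r ≥ 1 be an integer and let w : ℤ → ℂ be a sequence such that w_n → 0 as n → +∞. Suppose that for every integer n ≥ r+1 one has (n+r)(n+r−1)·w_{n−1} = (n−r)(n−r+1)·w_{n+1}. Then w_n = 0 for every integer n ≥ r. -/
/-!
The recurrence gives `w_{n+1} / w_{n-1} = (n+r)(n+r-1) / ((n-r)(n-r+1))`, a ratio of modulus at
least `1` once `n ≥ r + 1`. Hence `‖w m‖ ≤ ‖w (m + 2)‖` for `m ≥ r`, so each `‖w n‖` with `n ≥ r`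
is bounded by the tail `‖w (n + 2k)‖ → 0`, and must vanish.
-/

open Filter Topology

theorem norm_le_norm_of_mul_eq_mul {𝕜 : Type*} [NormedDivisionRing 𝕜] {a b x y : 𝕜}
    (ha : a ≠ 0) (hba : ‖b‖ ≤ ‖a‖) (h : a * x = b * y) : ‖x‖ ≤ ‖y‖ := by
  have hnorm : ‖a‖ * ‖x‖ = ‖b‖ * ‖y‖ := by rw [← norm_mul, ← norm_mul, h]
  refine le_of_mul_le_mul_left ?_ (norm_pos_iff.mpr ha)
  rw [hnorm]
  exact mul_le_mul_of_nonneg_right hba (norm_nonneg y)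

theorem eq_zero_of_norm_le_norm_add_of_tendsto_zero {E : Type*} [NormedAddCommGroup E]
    {u : ℤ → E} {r d : ℤ} (hd : 0 < d) (hu : Tendsto u atTop (𝓝 0))
    (hstep : ∀ m, r ≤ m → ‖u m‖ ≤ ‖u (m + d)‖) {n : ℤ} (hn : r ≤ n) : u n = 0 := by
  have hprog : ∀ k : ℕ, ‖u n‖ ≤ ‖u (n + d * k)‖ := by
    intro k
    induction k with
    | zero => simp
    | succ k ih =>
      have hdk : 0 ≤ d * k := by positivity
      have hnext := hstep (n + d * k) (by omega)
      rw [add_assoc, ← mul_add_one] at hnext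
      exact_mod_cast ih.trans hnext
  have hprog_atTop : Tendsto (fun k : ℕ => n + d * k) atTop atTop :=
    tendsto_atTop_add_const_left _ n
      (tendsto_natCast_atTop_atTop.const_mul_atTop' hd)
  have htail : Tendsto (fun k : ℕ => ‖u (n + d * k)‖) atTop (𝓝 0) := by
    simpa using (hu.comp hprog_atTop).norm
  exact norm_le_zero_iff.mp (ge_of_tendsto' htail hprog)

-- The two coefficients differ by `2n(2r - 1)`.
theorem chebyshev_coeff_le {r n : ℤ} (hr : 1 ≤ r) (hn : r + 1 ≤ n) :
    0 < (n + r) * (n + r - 1) ∧ 0 ≤ (n - r) * (n - r + 1) ∧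
      (n - r) * (n - r + 1) ≤ (n + r) * (n + r - 1) :=
  ⟨by nlinarith, by nlinarith, by nlinarith⟩

theorem norm_le_norm_add_two_of_chebyshev_recurrence {r : ℤ} (hr : 1 ≤ r) {w : ℤ → ℂ}
    (hrec : ∀ n : ℤ, r + 1 ≤ n →
      ((n + r : ℤ) : ℂ) * ((n + r - 1 : ℤ) : ℂ) * w (n - 1) =
        ((n - r : ℤ) : ℂ) * ((n - r + 1 : ℤ) : ℂ) * w (n + 1))
    {m : ℤ} (hm : r ≤ m) : ‖w m‖ ≤ ‖w (m + 2)‖ := by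
  obtain ⟨hpos, hnonneg, hle⟩ := chebyshev_coeff_le hr (n := m + 1) (by omega)
  have hrec' : (((m + 1 + r) * (m + 1 + r - 1) : ℤ) : ℂ) * w m =
      (((m + 1 - r) * (m + 1 - r + 1) : ℤ) : ℂ) * w (m + 2) := by
    have h := hrec (m + 1) (by omega)
    rw [add_sub_cancel_right, add_assoc m 1 1, one_add_one_eq_two] at h
    push_cast at h ⊢
    exact h
  refine norm_le_norm_of_mul_eq_mul (Int.cast_ne_zero.mpr hpos.ne') ?_ hrec'
  rw [Complex.norm_intCast, Complex.norm_intCast]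
  exact_mod_cast abs_le_abs_of_nonneg hnonneg hle

/-- If `w : ℤ → ℂ` tends to `0` at `+∞` and satisfies
`(n+r)(n+r−1)·w_{n−1} = (n−r)(n−r+1)·w_{n+1}` for all `n ≥ r+1`, then `w_n = 0`
for all `n ≥ r`. -/
theorem stmt_0 (r : ℤ) (hr : 1 ≤ r) (w : ℤ → ℂ)
    (hlim : Filter.Tendsto w Filter.atTop (nhds 0))
    (hrec : ∀ n : ℤ, r + 1 ≤ n →
      ((n + r : ℤ) : ℂ) * ((n + r - 1 : ℤ) : ℂ) * w (n - 1) =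
        ((n - r : ℤ) : ℂ) * ((n - r + 1 : ℤ) : ℂ) * w (n + 1)) :
    ∀ n : ℤ, r ≤ n → w n = 0 := fun _ hn =>
  eq_zero_of_norm_le_norm_add_of_tendsto_zero two_pos hlim
    (fun _ hm => norm_le_norm_add_two_of_chebyshev_recurrence hr hrec hm) hn
end

section
/- Let r ≥ 1, s ≥ 0 be integers and let (b_k)_{k∈ℤ} be a family of polynomials with complex coefficients such that b_k = 0 whenever |k| > s, and such that for all integers i and all integers j with |j| ≤ r−1 one has b_{j−i}(−j) = −b_{j+i}(−j). Define, for u : ℤ → ℂ, (P·u)_n = Σ_{k=−s}^{s} b_k(n)·u_{n+k}. Then for every symmetric sequence u : ℤ → ℂ (i.e., u_{−n} = u_n for all n) and every integer n with |n| ≤ r−1, one has (P·u)_n = 0. -/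
/-!
Put `j = -n`. The hypothesis says that `k ↦ b_k(n)` is odd about `k = j`, while `k ↦ u_{n+k}`
is even about `j` because `u` is symmetric and `n + (2j - k) = -(n + k)`. So the summand of
`(P·u)_n` is odd about `j`, and its sum over any window centred at `j` vanishes; since `b_k = 0`
for `|k| > s`, the window `[-s, s]` may be enlarged to one centred at `j`.
-/

open Polynomial

/-- The recurrence operator `P` with polynomial coefficients `b_k`:
`(P·u)_n = Σ_{k=−s}^{s} b_k(n)·u_{n+k}`. -/
noncomputable def recOp2 (s : ℕ) (b : ℤ → Polynomial ℂ) (u : ℤ → ℂ) (n : ℤ) : ℂ :=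
  ∑ k ∈ Finset.Icc (-(s : ℤ)) (s : ℤ), (b k).eval (n : ℂ) * u (n + k)

theorem Finset.sum_Icc_eq_zero_of_odd_about {M : Type*} [AddCommGroup M] [IsAddTorsionFree M]
    {f : ℤ → M} (c m : ℤ) (hf : ∀ k, f (2 * c - k) = -f k) :
    ∑ k ∈ Finset.Icc (c - m) (c + m), f k = 0 := by
  have hreflect : ∑ k ∈ Finset.Icc (c - m) (c + m), f k
      = ∑ k ∈ Finset.Icc (c - m) (c + m), f (2 * c - k) :=
    Finset.sum_nbij' (fun k ↦ 2 * c - k) (fun k ↦ 2 * c - k)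
      (by intro k hk; simp only [Finset.mem_Icc] at hk ⊢; omega)
      (by intro k hk; simp only [Finset.mem_Icc] at hk ⊢; omega)
      (by intro k _; ring) (by intro k _; ring) (by intro k _; rw [sub_sub_cancel])
  simp only [hf, Finset.sum_neg_distrib] at hreflect
  exact self_eq_neg.mp hreflect

theorem recOp2_eq_sum_of_subset {s : ℕ} {b : ℤ → Polynomial ℂ}
    (hb0 : ∀ k : ℤ, (s : ℤ) < |k| → b k = 0) (u : ℤ → ℂ) (n : ℤ) {t : Finset ℤ}
    (ht : Finset.Icc (-(s : ℤ)) s ⊆ t) :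
    recOp2 s b u n = ∑ k ∈ t, (b k).eval (n : ℂ) * u (n + k) := by
  refine Finset.sum_subset ht fun k _ hk ↦ ?_
  rw [Finset.mem_Icc, ← abs_le, not_le] at hk
  rw [hb0 k hk, eval_zero, zero_mul]

theorem stmt_2_general (r : ℤ) (s : ℕ) (b : ℤ → Polynomial ℂ)
    (hb0 : ∀ k : ℤ, (s : ℤ) < |k| → b k = 0)
    (hanti : ∀ i j : ℤ, |j| ≤ r - 1 →
      (b (j - i)).eval ((-j : ℤ) : ℂ) = -(b (j + i)).eval ((-j : ℤ) : ℂ))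
    (u : ℤ → ℂ) (husym : ∀ n : ℤ, u (-n) = u n) :
    ∀ n : ℤ, |n| ≤ r - 1 → recOp2 s b u n = 0 := by
  intro n hn
  have hwindow : Finset.Icc (-(s : ℤ)) s ⊆ Finset.Icc (-n - (s + |n|)) (-n + (s + |n|)) := by
    intro k hk
    simp only [Finset.mem_Icc] at hk ⊢
    constructor <;> linarith [neg_abs_le n, le_abs_self n]
  rw [recOp2_eq_sum_of_subset hb0 u n hwindow]
  refine Finset.sum_Icc_eq_zero_of_odd_about _ _ fun k ↦ ?_
  have hb : (b (2 * -n - k)).eval (n : ℂ) = -(b k).eval (n : ℂ) := by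
    have h := hanti (n + k) (-n) (by rwa [abs_neg])
    rwa [neg_neg, show -n - (n + k) = 2 * -n - k by ring, neg_add_cancel_left] at h
  have hu : u (n + (2 * -n - k)) = u (n + k) := by
    rw [show n + (2 * -n - k) = -(n + k) by ring, husym]
  rw [hb, hu, neg_mul]

/-- if `b_k = 0` for `|k| > s` and `b_{j−i}(−j) = −b_{j+i}(−j)` for
all `i` and all `|j| ≤ r−1`, then the image under `P` of any symmetric sequence
vanishes at all indices `n` with `|n| ≤ r−1`. -/
theorem stmt_2 (r : ℤ) (hr : 1 ≤ r) (s : ℕ) (b : ℤ → Polynomial ℂ)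
    (hb0 : ∀ k : ℤ, (s : ℤ) < |k| → b k = 0)
    (hanti : ∀ i j : ℤ, |j| ≤ r - 1 →
      (b (j - i)).eval ((-j : ℤ) : ℂ) = -(b (j + i)).eval ((-j : ℤ) : ℂ))
    (u : ℤ → ℂ) (husym : ∀ n : ℤ, u (-n) = u n) :
    ∀ n : ℤ, |n| ≤ r - 1 → recOp2 s b u n = 0 :=
  stmt_2_general r s b hb0 hanti u husym
end

section
/- Let a, b be real polynomials such that b(x) ≠ 0 for all x ∈ [−1,1], and let y(x) = a(x)/b(x) on [−1,1]. For n ∈ ℤ define the Chebyshev coefficients y_n = (1/π)·∫_{−1}^{1} y(x)·T_n(x)·(1−x²)^{−1/2} dx, and similarly a_n and b_n for the polynomials a and b (so y_{−n} = y_n, a_{−n} = a_n, b_{−n} = b_n, and b_i = 0 for |i| > deg b). Then for every n ∈ ℤ, Σ_{i=−deg b}^{deg b} b_i · y_{n−i} = a_n. -/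
/-!
By the product formula `2 T_j T_n = T_{n+j} + T_{n-j}`, the Chebyshev coefficients of `T_j · y`
are `(y_{n+j} + y_{n-j}) / 2`, and those of `T_j` itself are `(δ_{n,-j} + δ_{n,j}) / 2`. Hence
`(p · y)_n = Σ_{|i| ≤ D} p_i y_{n-i}` holds for `p = T_j` with `j ≤ D`, and by linearity for every
polynomial `p` of degree at most `D`, since `T_0, …, T_D` span these. For `p = b` and `y = a / b`
the product `b · y` agrees with `a` on `[-1, 1]`, which is all the coefficients see.
-/

open Polynomial intervalIntegral

/-- The `n`-th Chebyshev coefficient of a function `f : ℝ → ℝ`: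
`(1/π)·∫_{−1}^{1} f(x)·T_n(x)·(1−x²)^{−1/2} dx`. -/
noncomputable def chebCoeff (f : ℝ → ℝ) (n : ℤ) : ℝ :=
  (1 / Real.pi) *
    ∫ x in (-1 : ℝ)..1, f x * (Polynomial.Chebyshev.T ℝ n).eval x / Real.sqrt (1 - x ^ 2)

open MeasureTheory

namespace Polynomial.Chebyshev

variable {R : Type*} [Field R] [NeZero (2 : R)]

theorem mem_span_T_of_natDegree_le {D : ℕ} {p : R[X]} (hp : p.natDegree ≤ D) :
    p ∈ Submodule.span R ((fun j : ℕ => T R j) '' Set.Iic D) := by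
  induction D generalizing p with
  | zero =>
    rw [eq_C_of_natDegree_le_zero hp, ← mul_one (Polynomial.C _), ← T_zero, C_mul']
    exact Submodule.smul_mem _ _ (Submodule.subset_span ⟨0, by simp⟩)
  | succ D ih =>
    set t := T R ((D + 1 : ℕ) : ℤ)
    have ht_deg : t.natDegree = D + 1 := natDegree_T R _
    have ht_lead : t.coeff (D + 1) = 2 ^ D := by
      rw [← ht_deg, ← leadingCoeff, leadingCoeff_T, Int.natAbs_natCast, Nat.add_sub_cancel]
    set c := p.coeff (D + 1) / 2 ^ D
    have hq : (p - c • t).natDegree ≤ D := by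
      rw [natDegree_le_iff_coeff_eq_zero]
      intro m hm
      rcases (Nat.succ_le_of_lt hm).eq_or_lt with rfl | hlt
      · simp [c, ht_lead, two_ne_zero]
      · rw [coeff_sub, coeff_smul, coeff_eq_zero_of_natDegree_lt (hp.trans_lt hlt),
          coeff_eq_zero_of_natDegree_lt (ht_deg ▸ hlt), smul_zero, sub_zero]
    have hmono : Submodule.span R ((fun j : ℕ => T R j) '' Set.Iic D) ≤
        Submodule.span R ((fun j : ℕ => T R j) '' Set.Iic (D + 1)) :=
      Submodule.span_mono (Set.image_mono (Set.Iic_subset_Iic.mpr D.le_succ))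
    rw [← sub_add_cancel p (c • t)]
    exact add_mem (hmono (ih hq))
      (Submodule.smul_mem _ _ (Submodule.subset_span ⟨D + 1, Set.mem_Iic.mpr le_rfl, rfl⟩))

end Polynomial.Chebyshev

theorem chebCoeff_eq_integral_measureT (f : ℝ → ℝ) (n : ℤ) :
    chebCoeff f n = Real.pi⁻¹ * ∫ x, f x * (Chebyshev.T ℝ n).eval x ∂Chebyshev.measureT := by
  rw [chebCoeff, Chebyshev.integral_measureT, one_div]
  simp only [div_eq_mul_inv, Real.sqrt_inv]

theorem chebCoeff_congr {f g : ℝ → ℝ} (h : Set.EqOn f g (Set.Icc (-1) 1)) (n : ℤ) :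
    chebCoeff f n = chebCoeff g n := by
  unfold chebCoeff
  congr 1
  refine integral_congr fun x hx => ?_
  rw [Set.uIcc_of_le (by norm_num)] at hx
  rw [h hx]

theorem chebCoeff_const_mul (c : ℝ) (f : ℝ → ℝ) (n : ℤ) :
    chebCoeff (fun x => c * f x) n = c * chebCoeff f n := by
  simp only [chebCoeff_eq_integral_measureT, mul_assoc, MeasureTheory.integral_const_mul]
  ring

theorem chebCoeff_add {f g : ℝ → ℝ} (hf : ContinuousOn f (Set.Icc (-1) 1))
    (hg : ContinuousOn g (Set.Icc (-1) 1)) (n : ℤ) :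
    chebCoeff (fun x => f x + g x) n = chebCoeff f n + chebCoeff g n := by
  have hT := (Chebyshev.T ℝ n).continuous.continuousOn (s := Set.Icc (-1) 1)
  simp only [chebCoeff_eq_integral_measureT, add_mul]
  rw [integral_add (Chebyshev.integrable_measureT (f := fun x => f x * _) (hf.mul hT))
    (Chebyshev.integrable_measureT (f := fun x => g x * _) (hg.mul hT)), mul_add]

theorem chebCoeff_T_mul {f : ℝ → ℝ} (hf : ContinuousOn f (Set.Icc (-1) 1)) (j n : ℤ) :
    chebCoeff (fun x => (Chebyshev.T ℝ j).eval x * f x) n =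
      (chebCoeff f (n + j) + chebCoeff f (n - j)) / 2 := by
  have hprod (x : ℝ) : (Chebyshev.T ℝ j).eval x * f x * (Chebyshev.T ℝ n).eval x =
      (f x * (Chebyshev.T ℝ (n + j)).eval x + f x * (Chebyshev.T ℝ (n - j)).eval x) / 2 := by
    have := congrArg (eval x) (Chebyshev.T_mul_T ℝ n j)
    simp only [eval_mul, eval_add, eval_ofNat] at this
    linear_combination f x * this / 2
  have hT (k : ℤ) := (Chebyshev.T ℝ k).continuous.continuousOn (s := Set.Icc (-1) 1)
  simp only [chebCoeff_eq_integral_measureT, hprod]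
  rw [MeasureTheory.integral_div,
    integral_add (Chebyshev.integrable_measureT (f := fun x => f x * _) (hf.mul (hT _)))
      (Chebyshev.integrable_measureT (f := fun x => f x * _) (hf.mul (hT _)))]
  ring

theorem chebCoeff_one (n : ℤ) : chebCoeff (fun _ => 1) n = if n = 0 then 1 else 0 := by
  rw [chebCoeff_eq_integral_measureT]
  split_ifs with hn
  · simp only [hn, one_mul]
    rw [Chebyshev.integral_eval_T_real_measureT_zero, inv_mul_cancel₀ Real.pi_ne_zero]
  · simp [Chebyshev.integral_eval_T_real_measureT_of_ne_zero hn]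

theorem chebCoeff_T (j n : ℤ) :
    chebCoeff (fun x => (Chebyshev.T ℝ j).eval x) n =
      ((if n = -j then 1 else 0) + (if n = j then 1 else 0)) / 2 := by
  simpa [chebCoeff_one, add_eq_zero_iff_eq_neg, sub_eq_zero] using
    chebCoeff_T_mul continuousOn_const j n (f := fun _ => 1)

theorem chebCoeff_eval_mul {y : ℝ → ℝ} (hy : ContinuousOn y (Set.Icc (-1) 1)) {D : ℕ}
    {p : ℝ[X]} (hp : p.natDegree ≤ D) (n : ℤ) :
    chebCoeff (fun x => p.eval x * y x) n =
      ∑ i ∈ Finset.Icc (-(D : ℤ)) D, chebCoeff (fun x => p.eval x) i * chebCoeff y (n - i) := by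
  have hcont (q : ℝ[X]) : ContinuousOn (fun x => q.eval x) (Set.Icc (-1) 1) :=
    q.continuous.continuousOn
  have hspan := Chebyshev.mem_span_T_of_natDegree_le hp
  clear hp
  induction hspan using Submodule.span_induction with
  | mem _ hq =>
    obtain ⟨j, hj, rfl⟩ := hq
    have hj' : (j : ℤ) ≤ D := by exact_mod_cast hj
    simp only [chebCoeff_T_mul hy, chebCoeff_T, add_div, add_mul, ite_mul, one_mul, zero_mul,
      div_mul_eq_mul_div, Finset.sum_add_distrib, ← Finset.sum_div, Finset.sum_ite_eq',
      Finset.mem_Icc]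
    rw [if_pos (by omega), if_pos (by omega), sub_neg_eq_add]
  | zero => simp [chebCoeff]
  | add q r _ _ hq hr =>
    simp only [eval_add, add_mul]
    rw [chebCoeff_add (f := fun x => q.eval x * y x) (g := fun x => r.eval x * y x)
      ((hcont q).mul hy) ((hcont r).mul hy), hq, hr]
    simp only [chebCoeff_add (hcont q) (hcont r), add_mul, Finset.sum_add_distrib]
  | smul c q _ hq =>
    simp only [eval_smul, smul_eq_mul, mul_assoc, chebCoeff_const_mul, hq, Finset.mul_sum]

/-- the Chebyshev coefficients of a rational function
`y = a/b` with `b` nonvanishing on `[−1,1]` satisfy the constant-coefficient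
recurrence `Σ_{i=−deg b}^{deg b} b_i · y_{n−i} = a_n`. -/
theorem stmt_3 (a b : Polynomial ℝ)
    (hb : ∀ x ∈ Set.Icc (-1 : ℝ) 1, b.eval x ≠ 0) :
    ∀ n : ℤ,
      ∑ i ∈ Finset.Icc (-(b.natDegree : ℤ)) (b.natDegree : ℤ),
          chebCoeff (fun x => b.eval x) i *
            chebCoeff (fun x => a.eval x / b.eval x) (n - i) =
        chebCoeff (fun x => a.eval x) n := by
  intro n
  have hy : ContinuousOn (fun x => a.eval x / b.eval x) (Set.Icc (-1) 1) :=
    a.continuous.continuousOn.div b.continuous.continuousOn hb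
  rw [← chebCoeff_eval_mul hy le_rfl]
  exact chebCoeff_congr (fun x hx => mul_div_cancel₀ _ (hb x hx)) n
end

section
/- Let t be a real number with 0 < t < 1, and let j ≥ 1 and d ≥ 0 be integers. Then Σ_{n=d+1}^{∞} binomial(n+j−1, j−1)·t^{n+j} ≤ (d+2)^{j−1}·t^{d+1}·Σ_{n=0}^{∞} binomial(n+j−1, j−1)·t^{n+j} = (d+2)^{j−1}·t^{d+j+1}/(1−t)^{j}, and in particular the left-hand series converges. -/
/-!
Since `(n + m + k + 1) ≤ (m + 1) (n + k + 1)`, each step of the recursion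
`(N + 1) · C(N, k) = (k + 1) · C(N + 1, k + 1)` loses at most a factor `m + 1` when the top
index is shifted by `m`, so `C(n + m + k, k) ≤ (m + 1)^k C(n + k, k)`. Hence the tail of the
series beyond index `d` is dominated termwise by `(d + 2)^k t^(d+1)` times the full series,
which is the negative binomial series `Σ C(n + k, k) tⁿ = (1 - t)^-(k+1)` shifted by `t^(k+1)`.
-/

theorem Nat.choose_add_le_pow_mul_choose (n m k : ℕ) :
    (n + m + k).choose k ≤ (m + 1) ^ k * (n + k).choose k := by
  induction k with
  | zero => simp
  | succ k ih =>
    refine Nat.le_of_mul_le_mul_right ?_ k.succ_pos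
    calc (n + m + (k + 1)).choose (k + 1) * (k + 1)
        = (n + m + k + 1) * (n + m + k).choose k := (Nat.add_one_mul_choose_eq _ _).symm
      _ ≤ ((m + 1) * (n + k + 1)) * ((m + 1) ^ k * (n + k).choose k) :=
          Nat.mul_le_mul (by nlinarith) ih
      _ = (m + 1) ^ (k + 1) * ((n + k + 1) * (n + k).choose k) := by ring
      _ = (m + 1) ^ (k + 1) * (n + (k + 1)).choose (k + 1) * (k + 1) := by
          rw [Nat.add_one_mul_choose_eq, mul_assoc]; rfl

theorem choose_mul_pow_shift_le {t : ℝ} (ht : 0 ≤ t) (n m k : ℕ) :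
    ((n + m + k).choose k : ℝ) * t ^ (n + m + k + 1) ≤
      (m + 1 : ℝ) ^ k * t ^ m * ((n + k).choose k * t ^ (n + k + 1)) := by
  have hchoose : ((n + m + k).choose k : ℝ) ≤ (m + 1 : ℝ) ^ k * (n + k).choose k := by
    exact_mod_cast Nat.choose_add_le_pow_mul_choose n m k
  calc ((n + m + k).choose k : ℝ) * t ^ (n + m + k + 1)
      = ((n + m + k).choose k : ℝ) * (t ^ m * t ^ (n + k + 1)) := by ring
    _ ≤ ((m + 1 : ℝ) ^ k * (n + k).choose k) * (t ^ m * t ^ (n + k + 1)) := by gcongr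
    _ = (m + 1 : ℝ) ^ k * t ^ m * ((n + k).choose k * t ^ (n + k + 1)) := by ring

theorem hasSum_choose_mul_pow_add_succ {𝕜 : Type*} [NormedField 𝕜] [HasSummableGeomSeries 𝕜]
    (k : ℕ) {t : 𝕜} (ht : ‖t‖ < 1) :
    HasSum (fun n ↦ ((n + k).choose k : 𝕜) * t ^ (n + k + 1))
      (t ^ (k + 1) / (1 - t) ^ (k + 1)) := by
  have h := (hasSum_choose_mul_geometric_of_norm_lt_one k ht).mul_right (t ^ (k + 1))
  simpa only [one_div_mul_eq_div, mul_assoc, ← pow_add, add_assoc] using h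

theorem tsum_le_mul_tsum_of_le {ι : Type*} {f g : ι → ℝ} {c : ℝ} (hf : ∀ i, 0 ≤ f i)
    (hg : Summable g) (h : ∀ i, f i ≤ c * g i) : ∑' i, f i ≤ c * ∑' i, g i :=
  have hcg := hg.mul_left c
  (Summable.tsum_le_tsum h (hcg.of_nonneg_of_le hf h) hcg).trans_eq tsum_mul_left

/-- for `0 < t < 1`, `j ≥ 1` and `d ≥ 0`, the series
`Σ_{n} binomial(n+j−1, j−1)·t^{n+j}` converges, its tail beyond index `d`
is at most `(d+2)^{j−1}·t^{d+1}` times the full sum, and the full sum times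
`(d+2)^{j−1}·t^{d+1}` equals `(d+2)^{j−1}·t^{d+j+1}/(1−t)^{j}`. -/
theorem stmt_5 (t : ℝ) (ht0 : 0 < t) (ht1 : t < 1) (j d : ℕ) (hj : 1 ≤ j) :
    Summable (fun n : ℕ => (Nat.choose (n + j - 1) (j - 1) : ℝ) * t ^ (n + j)) ∧
    (∑' n : ℕ, (Nat.choose ((n + d + 1) + j - 1) (j - 1) : ℝ) * t ^ ((n + d + 1) + j)) ≤
      (d + 2 : ℝ) ^ (j - 1) * t ^ (d + 1) *
        ∑' n : ℕ, (Nat.choose (n + j - 1) (j - 1) : ℝ) * t ^ (n + j) ∧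
    (d + 2 : ℝ) ^ (j - 1) * t ^ (d + 1) *
        (∑' n : ℕ, (Nat.choose (n + j - 1) (j - 1) : ℝ) * t ^ (n + j)) =
      (d + 2 : ℝ) ^ (j - 1) * t ^ (d + j + 1) / (1 - t) ^ j := by
  obtain ⟨k, rfl⟩ : ∃ k, j = k + 1 := ⟨j - 1, by omega⟩
  simp only [← add_assoc, Nat.add_sub_cancel]
  have hsum := hasSum_choose_mul_pow_add_succ k (t := t) (by rwa [Real.norm_of_nonneg ht0.le])
  refine ⟨hsum.summable, ?_, ?_⟩
  · refine tsum_le_mul_tsum_of_le (fun n ↦ by positivity) hsum.summable fun n ↦ ?_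
    simpa [add_assoc, one_add_one_eq_two] using choose_mul_pow_shift_le ht0.le n (d + 1) k
  · rw [hsum.tsum_eq]
    have hpow : (1 - t) ^ (k + 1) ≠ 0 := pow_ne_zero _ (by linarith)
    field_simp
    ring
end

section
/- Let r ≥ 1 be an integer, let α_0, α_1, …, α_r be real polynomials, and let y : ℝ → ℝ be r times continuously differentiable on an open set containing [−1,1]. Suppose that Σ_{k=0}^{r} (α_k·y)^{(k)}(x) = 0 for all x ∈ [−1,1], where (α_k·y)^{(k)} denotes the k-th derivative of the product function x ↦ α_k(x)·y(x). Then for all x ∈ [−1,1], α_r(x)·y(x) = g(x) + ∫_0^x K(x,t)·y(t) dt, where K(x,t) = −Σ_{k=0}^{r−1} ((x−t)^k / k!)·α_{r−1−k}(t), and g(x) = Σ_{k=0}^{r−1} ( Σ_{m=r−k}^{r} (α_m·y)^{(m−(r−k))}(0) ) · x^k / k!. -/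
/-!
Integrate the equation against `(x - t)^(r-1)/(r-1)!` from `0` to `x`. Repeated integration
by parts moves the derivatives off each term,
`∫ₐˣ (x-t)^(n+j)/(n+j)! h⁽ʲ⁾ = ∫ₐˣ (x-t)^n/n! h - ∑_{i<j} h⁽ⁱ⁾(a) (x-a)^(n+1+i)/(n+1+i)!`,
so for `m < r` the term `(α_m y)^{(m)}` becomes `∫₀ˣ (x-t)^(r-1-m)/(r-1-m)! α_m y` plus
values at `0`, while the top term `(α_r y)^{(r)}` is the integral remainder of Taylor's
formula for `α_r y` at `0`. The values at `0` of all terms, grouped by powers of `x`,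
make up `g`.
-/

open Polynomial intervalIntegral
open MeasureTheory

section IteratedDeriv

variable {𝕜 F : Type*} [NontriviallyNormedField 𝕜] [NormedAddCommGroup F] [NormedSpace 𝕜 F]
  {f : 𝕜 → F} {U : Set 𝕜} {n : WithTop ℕ∞} {i : ℕ}

theorem ContDiffOn.continuousOn_iteratedDeriv_of_isOpen (hf : ContDiffOn 𝕜 n f U)
    (hU : IsOpen U) (hi : i ≤ n) : ContinuousOn (iteratedDeriv i f) U :=
  (hf.continuousOn_iteratedDerivWithin hi hU.uniqueDiffOn).congr
    (iteratedDerivWithin_of_isOpen hU).symm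

theorem ContDiffOn.hasDerivAt_iteratedDeriv_of_isOpen (hf : ContDiffOn 𝕜 n f U)
    (hU : IsOpen U) (hi : i < n) {x : 𝕜} (hx : x ∈ U) :
    HasDerivAt (iteratedDeriv i f) (iteratedDeriv (i + 1) f x) x := by
  have hdiff := (hf.differentiableOn_iteratedDerivWithin hi hU.uniqueDiffOn).congr
    (iteratedDerivWithin_of_isOpen hU).symm
  rw [iteratedDeriv_succ]
  exact (hdiff.differentiableAt (hU.mem_nhds hx)).hasDerivAt

end IteratedDeriv

theorem Polynomial.contDiff_eval {𝕜 : Type*} [NontriviallyNormedField 𝕜] (p : 𝕜[X])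
    (n : WithTop ℕ∞) : ContDiff 𝕜 n fun t => p.eval t := by
  simpa using p.contDiff_aeval (𝕜 := 𝕜) n

theorem hasDerivAt_sub_pow_succ_div_factorial (x t : ℝ) (n : ℕ) :
    HasDerivAt (fun t => (x - t) ^ (n + 1) / (n + 1).factorial)
      (-((x - t) ^ n / n.factorial)) t := by
  refine ((((hasDerivAt_id t).const_sub x).pow (n + 1)).div_const _).congr_deriv ?_
  rw [Nat.factorial_succ]
  push_cast
  field_simp
  simp

theorem integral_sub_pow_succ_div_factorial_mul {g g' : ℝ → ℝ} {a x : ℝ} (n : ℕ)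
    (hg : ∀ t ∈ Set.uIcc a x, HasDerivAt g (g' t) t) (hg' : IntervalIntegrable g' volume a x) :
    ∫ t in a..x, (x - t) ^ (n + 1) / (n + 1).factorial * g' t =
      (∫ t in a..x, (x - t) ^ n / n.factorial * g t) -
        g a * (x - a) ^ (n + 1) / (n + 1).factorial := by
  rw [integral_mul_deriv_eq_deriv_mul (fun t _ => hasDerivAt_sub_pow_succ_div_factorial x t n) hg
    (Continuous.intervalIntegrable (by fun_prop) _ _) hg']
  simp only [sub_self, zero_pow n.succ_ne_zero, zero_div, zero_mul, neg_mul,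
    intervalIntegral.integral_neg]
  ring

section Taylor

variable {h : ℝ → ℝ} {U : Set ℝ} {a x : ℝ}

theorem eq_sum_add_integral_iteratedDeriv (n : ℕ) (hU : IsOpen U) (hU' : Set.uIcc a x ⊆ U)
    (hh : ContDiffOn ℝ (n + 1) h U) :
    h x = ∑ k ∈ Finset.range (n + 1), iteratedDeriv k h a * (x - a) ^ k / k.factorial +
      ∫ t in a..x, (x - t) ^ n / n.factorial * iteratedDeriv (n + 1) h t := by
  induction n with
  | zero =>
    have hftc : ∫ t in a..x, iteratedDeriv 1 h t = h x - h a := by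
      refine integral_eq_sub_of_hasDerivAt (fun t ht => ?_) ?_
      · simpa using hh.hasDerivAt_iteratedDeriv_of_isOpen hU (i := 0) (by simp) (hU' ht)
      · exact ((hh.continuousOn_iteratedDeriv_of_isOpen hU le_rfl).mono hU').intervalIntegrable
    simp only [zero_add, Finset.sum_range_one, iteratedDeriv_zero, pow_zero, Nat.factorial_zero,
      Nat.cast_one, div_one, one_mul, hftc]
    ring
  | succ n ih =>
    rw [ih (hh.of_le (by norm_cast; omega)), Finset.sum_range_succ _ (n + 1),
      integral_sub_pow_succ_div_factorial_mul n
        (fun t ht => hh.hasDerivAt_iteratedDeriv_of_isOpen hU (by norm_cast; omega) (hU' ht))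
        ((hh.continuousOn_iteratedDeriv_of_isOpen hU le_rfl).mono hU').intervalIntegrable]
    ring

theorem integral_sub_pow_div_factorial_mul_iteratedDeriv (n j : ℕ) (hU : IsOpen U)
    (hU' : Set.uIcc a x ⊆ U) (hh : ContDiffOn ℝ j h U) :
    ∫ t in a..x, (x - t) ^ (n + j) / (n + j).factorial * iteratedDeriv j h t =
      (∫ t in a..x, (x - t) ^ n / n.factorial * h t) -
        ∑ i ∈ Finset.range j,
          iteratedDeriv i h a * (x - a) ^ (n + 1 + i) / (n + 1 + i).factorial := by
  induction j with
  | zero => simp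
  | succ j ih =>
    rw [← add_assoc, integral_sub_pow_succ_div_factorial_mul (n + j)
        (fun t ht => hh.hasDerivAt_iteratedDeriv_of_isOpen hU (by norm_cast; omega) (hU' ht))
        ((hh.continuousOn_iteratedDeriv_of_isOpen hU le_rfl).mono hU').intervalIntegrable,
      ih (hh.of_le (by norm_cast; omega)), Finset.sum_range_succ, add_right_comm n j 1]
    ring

end Taylor

theorem Finset.sum_range_sum_Icc_mul_eq_sum_range_sum_range {R : Type*}
    [NonUnitalNonAssocSemiring R] (r : ℕ) (c : ℕ → ℕ → R) (φ : ℕ → R) :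
    ∑ k ∈ Finset.range r, (∑ m ∈ Finset.Icc (r - k) r, c m (m - (r - k))) * φ k =
      ∑ m ∈ Finset.range (r + 1), ∑ i ∈ Finset.range m, c m i * φ (r - m + i) := by
  simp only [Finset.sum_mul]
  rw [Finset.sum_comm' (t' := Finset.range (r + 1)) (s' := fun m => Finset.Ico (r - m) r)
    (fun k m => by simp only [Finset.mem_range, Finset.mem_Icc, Finset.mem_Ico]; omega)]
  refine Finset.sum_congr rfl fun m hm => ?_
  rw [Finset.mem_range] at hm
  rw [Finset.sum_Ico_eq_sum_range, Nat.sub_sub_self (by omega)]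
  refine Finset.sum_congr rfl fun i hi => ?_
  rw [Finset.mem_range] at hi
  rw [show m - (r - (r - m + i)) = i by omega]

section Volterra

variable {f : ℕ → ℝ → ℝ} {U : Set ℝ} {a x : ℝ}

theorem integral_sub_pow_div_factorial_mul_sum_iteratedDeriv (s : ℕ) (hU : IsOpen U)
    (hU' : Set.uIcc a x ⊆ U) (hf : ∀ m ≤ s, ContDiffOn ℝ m (f m) U) :
    ∫ t in a..x, (x - t) ^ s / s.factorial *
        ∑ m ∈ Finset.range (s + 1), iteratedDeriv m (f m) t =
      (∫ t in a..x, ∑ k ∈ Finset.range (s + 1), (x - t) ^ k / k.factorial * f (s - k) t) -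
        ∑ m ∈ Finset.range (s + 1), ∑ i ∈ Finset.range m,
          iteratedDeriv i (f m) a * (x - a) ^ (s + 1 - m + i) / (s + 1 - m + i).factorial := by
  have hcont : ∀ m ≤ s, ∀ i ≤ m, ContinuousOn (iteratedDeriv i (f m)) (Set.uIcc a x) :=
    fun m hm i hi =>
      ((hf m hm).continuousOn_iteratedDeriv_of_isOpen hU (by exact_mod_cast hi)).mono hU'
  have hshift : ∀ m ∈ Finset.range (s + 1),
      ∫ t in a..x, (x - t) ^ s / s.factorial * iteratedDeriv m (f m) t =
        (∫ t in a..x, (x - t) ^ (s - m) / (s - m).factorial * f m t) -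
          ∑ i ∈ Finset.range m,
            iteratedDeriv i (f m) a * (x - a) ^ (s + 1 - m + i) / (s + 1 - m + i).factorial := by
    intro m hm
    have hms : m ≤ s := Nat.lt_succ_iff.mp (Finset.mem_range.mp hm)
    have h := integral_sub_pow_div_factorial_mul_iteratedDeriv (s - m) m hU hU' (hf m hms)
    rwa [Nat.sub_add_cancel hms, ← Nat.sub_add_comm hms] at h
  have hkernel :
      ∑ m ∈ Finset.range (s + 1), ∫ t in a..x, (x - t) ^ (s - m) / (s - m).factorial * f m t =
        ∫ t in a..x, ∑ k ∈ Finset.range (s + 1), (x - t) ^ k / k.factorial * f (s - k) t := by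
    have hint : ∀ m ∈ Finset.range (s + 1), IntervalIntegrable
        (fun t => (x - t) ^ (s - m) / (s - m).factorial * f m t) volume a x := by
      intro m hm
      have hfm := hcont m (Nat.lt_succ_iff.mp (Finset.mem_range.mp hm)) 0 (Nat.zero_le _)
      rw [iteratedDeriv_zero] at hfm
      exact ((Continuous.continuousOn (by fun_prop)).mul hfm).intervalIntegrable
    rw [← integral_finsetSum hint]
    refine integral_congr fun t _ => ?_
    rw [← Finset.sum_range_reflect]
    refine Finset.sum_congr rfl fun k hk => ?_
    rw [Finset.mem_range] at hk
    rw [Nat.add_sub_cancel, Nat.sub_sub_self (by omega)]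
  rw [← hkernel, ← Finset.sum_sub_distrib, ← Finset.sum_congr rfl hshift]
  simp only [Finset.mul_sum]
  exact integral_finsetSum fun m hm => ((Continuous.continuousOn (by fun_prop)).mul
    (hcont m (Nat.lt_succ_iff.mp (Finset.mem_range.mp hm)) m le_rfl)).intervalIntegrable

theorem eq_add_integral_of_sum_iteratedDeriv_eq_zero (r : ℕ) (hU : IsOpen U)
    (hU' : Set.uIcc a x ⊆ U) (hf : ∀ m ≤ r, ContDiffOn ℝ m (f m) U)
    (hode : ∀ t ∈ Set.uIcc a x, ∑ m ∈ Finset.range (r + 1), iteratedDeriv m (f m) t = 0) :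
    f r x = ∑ k ∈ Finset.range r,
        (∑ m ∈ Finset.Icc (r - k) r, iteratedDeriv (m - (r - k)) (f m) a) *
          (x - a) ^ k / k.factorial +
      ∫ t in a..x, -∑ k ∈ Finset.range r, (x - t) ^ k / k.factorial * f (r - 1 - k) t := by
  cases r with
  | zero => simpa using hode x Set.right_mem_uIcc
  | succ s =>
    have htop : ∫ t in a..x, (x - t) ^ s / s.factorial * iteratedDeriv (s + 1) (f (s + 1)) t =
        -∫ t in a..x, (x - t) ^ s / s.factorial *
          ∑ m ∈ Finset.range (s + 1), iteratedDeriv m (f m) t := by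
      rw [← intervalIntegral.integral_neg]
      refine integral_congr fun t ht => ?_
      have h := hode t ht
      rw [Finset.sum_range_succ] at h
      linear_combination (x - t) ^ s / s.factorial * h
    rw [eq_sum_add_integral_iteratedDeriv (h := f (s + 1)) s hU hU'
        (by exact_mod_cast hf (s + 1) le_rfl), htop,
      integral_sub_pow_div_factorial_mul_sum_iteratedDeriv s hU hU' fun m hm => hf m (by omega)]
    have hinit := Finset.sum_range_sum_Icc_mul_eq_sum_range_sum_range (s + 1)
      (fun m i => iteratedDeriv i (f m) a) (fun k => (x - a) ^ k / k.factorial)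
    simp only [mul_div_assoc] at hinit ⊢
    rw [hinit, Finset.sum_range_succ _ (s + 1), Nat.add_sub_cancel, Nat.sub_self,
      intervalIntegral.integral_neg]
    simp only [zero_add]
    ring

end Volterra

theorem stmt_7_general (r : ℕ) (α : ℕ → Polynomial ℝ) (y : ℝ → ℝ)
    (U : Set ℝ) (hU : IsOpen U) (hIccU : Set.Icc (-1 : ℝ) 1 ⊆ U)
    (hy : ContDiffOn ℝ r y U)
    (hode : ∀ x ∈ Set.Icc (-1 : ℝ) 1,
      ∑ k ∈ Finset.range (r + 1),
        iteratedDeriv k (fun t => (α k).eval t * y t) x = 0) :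
    ∀ x ∈ Set.Icc (-1 : ℝ) 1,
      (α r).eval x * y x =
        (∑ k ∈ Finset.range r,
            (∑ m ∈ Finset.Icc (r - k) r,
              iteratedDeriv (m - (r - k)) (fun t => (α m).eval t * y t) 0) *
              x ^ k / (Nat.factorial k : ℝ)) +
          ∫ t in (0 : ℝ)..x,
            (-(∑ k ∈ Finset.range r,
                ((x - t) ^ k / (Nat.factorial k : ℝ)) * (α (r - 1 - k)).eval t)) * y t := by
  intro x hx
  have hsub : Set.uIcc 0 x ⊆ Set.Icc (-1) 1 := Set.ordConnected_Icc.uIcc_subset (by norm_num) hx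
  have hf : ∀ m ≤ r, ContDiffOn ℝ m (fun t => (α m).eval t * y t) U := fun m hm =>
    ((α m).contDiff_eval m).contDiffOn.mul (hy.of_le (by exact_mod_cast hm))
  rw [eq_add_integral_of_sum_iteratedDeriv_eq_zero r hU (hsub.trans hIccU) hf
    fun t ht => hode t (hsub ht)]
  simp only [sub_zero, neg_mul, Finset.sum_mul, mul_assoc]

/-- a solution on `[−1,1]` of the differential equation
`Σ_{k=0}^{r} (α_k·y)^{(k)} = 0`, with `y` of class `C^r` on an open set containing
`[−1,1]`, satisfies the Volterra integral equation
`α_r(x)·y(x) = g(x) + ∫_0^x K(x,t)·y(t) dt`. -/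
theorem stmt_7 (r : ℕ) (hr : 1 ≤ r) (α : ℕ → Polynomial ℝ) (y : ℝ → ℝ)
    (U : Set ℝ) (hU : IsOpen U) (hIccU : Set.Icc (-1 : ℝ) 1 ⊆ U)
    (hy : ContDiffOn ℝ r y U)
    (hode : ∀ x ∈ Set.Icc (-1 : ℝ) 1,
      ∑ k ∈ Finset.range (r + 1),
        iteratedDeriv k (fun t => (α k).eval t * y t) x = 0) :
    ∀ x ∈ Set.Icc (-1 : ℝ) 1,
      (α r).eval x * y x =
        (∑ k ∈ Finset.range r,
            (∑ m ∈ Finset.Icc (r - k) r,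
              iteratedDeriv (m - (r - k)) (fun t => (α m).eval t * y t) 0) *
              x ^ k / (Nat.factorial k : ℝ)) +
          ∫ t in (0 : ℝ)..x,
            (-(∑ k ∈ Finset.range r,
                ((x - t) ^ k / (Nat.factorial k : ℝ)) * (α (r - 1 - k)).eval t)) * y t :=
  stmt_7_general r α y U hU hIccU hy hode
end

section
/- Let X be a real (or complex) Banach space, let V : X → X be a continuous linear operator with ‖V^m‖ ≤ A^m / m! for every integer m ≥ 1, where A ≥ 0. Let g ∈ X and define T : X → X by T(f) = g + V f. Suppose y ∈ X satisfies T(y) = y. Then for every p ∈ X and every integer i ≥ 1, ‖p − y‖ ≤ γ_i · ‖T^i(p) − p‖, where γ_i = Σ_{j=0}^{∞} A^{ij} / (ij)! and T^i denotes the i-fold composition of T. -/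
/-! Since `T` is affine with linear part `V`, the error `e = p - y` satisfies
`e - Vⁱ e = -(Tⁱ p - p)`. The bound `‖V^m‖ ≤ A^m/m!` makes `∑ ‖(Vⁱ)ʲ‖` converge, with sum at
most `γᵢ`, so `1 - Vⁱ` is inverted by its Neumann series and `‖e‖ ≤ γᵢ ‖Tⁱ p - p‖`. -/

open Function

namespace ContinuousLinearMap

variable {𝕜 E : Type*} [NontriviallyNormedField 𝕜] [NormedAddCommGroup E] [NormedSpace 𝕜 E]

theorem iterate_sub_iterate_of_eq_add {V : E →L[𝕜] E} {g : E} {T : E → E}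
    (hT : ∀ f, T f = g + V f) (n : ℕ) (f f' : E) : T^[n] f - T^[n] f' = (V ^ n) (f - f') := by
  induction n generalizing f f' with
  | zero => simp
  | succ n ih =>
    rw [iterate_succ_apply', iterate_succ_apply', hT, hT, add_sub_add_left_eq_sub, ← map_sub, ih,
      pow_succ', mul_apply_eq_comp]

theorem norm_le_tsum_norm_pow_mul_norm_sub_apply [CompleteSpace E] {W : E →L[𝕜] E}
    (hW : Summable fun j ↦ ‖W ^ j‖) (e : E) : ‖e‖ ≤ (∑' j, ‖W ^ j‖) * ‖e - W e‖ := by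
  have hinv : (∑' j, W ^ j) * (1 - W) = 1 := hW.of_norm.tsum_pow_mul_one_sub
  calc ‖e‖ = ‖(∑' j, W ^ j) (e - W e)‖ := by simpa using congrArg norm (congr($hinv e)).symm
    _ ≤ ‖∑' j, W ^ j‖ * ‖e - W e‖ := le_opNorm _ _
    _ ≤ (∑' j, ‖W ^ j‖) * ‖e - W e‖ := by gcongr; exact norm_tsum_le_tsum_norm hW

theorem norm_pow_le_pow_div_factorial {V : E →L[𝕜] E} {A : ℝ}
    (hV : ∀ m : ℕ, 1 ≤ m → ‖V ^ m‖ ≤ A ^ m / m.factorial) (m : ℕ) :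
    ‖V ^ m‖ ≤ A ^ m / m.factorial := by
  rcases m.eq_zero_or_pos with rfl | hm
  · rw [pow_zero, pow_zero, Nat.factorial_zero, Nat.cast_one, div_one]
    exact norm_id_le
  · exact hV m hm

end ContinuousLinearMap

theorem Real.summable_pow_mul_div_factorial_mul (A : ℝ) {i : ℕ} (hi : 0 < i) :
    Summable fun j : ℕ ↦ A ^ (i * j) / (i * j).factorial :=
  (Real.summable_pow_div_factorial A).comp_injective (mul_right_injective₀ hi.ne')

theorem stmt_11_general (X : Type*) [NormedAddCommGroup X] [NormedSpace ℝ X] [CompleteSpace X]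
    (V : X →L[ℝ] X) (A : ℝ)
    (hV : ∀ m : ℕ, 1 ≤ m → ‖V ^ m‖ ≤ A ^ m / (Nat.factorial m : ℝ))
    (g : X) (T : X → X) (hT : ∀ f : X, T f = g + V f)
    (y : X) (hy : T y = y) :
    ∀ (p : X) (i : ℕ), 1 ≤ i →
      ‖p - y‖ ≤ (∑' j : ℕ, A ^ (i * j) / (Nat.factorial (i * j) : ℝ)) * ‖T^[i] p - p‖ := by
  intro p i hi
  have hγ := Real.summable_pow_mul_div_factorial_mul A hi
  have hterm (j : ℕ) : ‖(V ^ i) ^ j‖ ≤ A ^ (i * j) / (i * j).factorial := by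
    rw [← pow_mul]; exact ContinuousLinearMap.norm_pow_le_pow_div_factorial hV _
  have hW : Summable fun j ↦ ‖(V ^ i) ^ j‖ := hγ.of_nonneg_of_le (fun _ ↦ norm_nonneg _) hterm
  have herror : p - y - (V ^ i) (p - y) = -(T^[i] p - p) := by
    rw [← ContinuousLinearMap.iterate_sub_iterate_of_eq_add hT, iterate_fixed hy]
    abel
  calc ‖p - y‖ ≤ (∑' j, ‖(V ^ i) ^ j‖) * ‖p - y - (V ^ i) (p - y)‖ :=
        ContinuousLinearMap.norm_le_tsum_norm_pow_mul_norm_sub_apply hW _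
    _ ≤ (∑' j : ℕ, A ^ (i * j) / (Nat.factorial (i * j) : ℝ)) * ‖T^[i] p - p‖ := by
        rw [herror, norm_neg]
        exact mul_le_mul_of_nonneg_right (hW.tsum_le_tsum hterm hγ) (norm_nonneg _)

/-- a posteriori error bound, Proposition 7.2: if
`‖V^m‖ ≤ A^m/m!` for all `m ≥ 1`, `T(f) = g + V f`, and `T(y) = y`, then
`‖p − y‖ ≤ γ_i·‖T^i(p) − p‖` for every `p` and every `i ≥ 1`, where
`γ_i = Σ_j A^{ij}/(ij)!`. -/
theorem stmt_11 (X : Type*) [NormedAddCommGroup X] [NormedSpace ℝ X] [CompleteSpace X]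
    (V : X →L[ℝ] X) (A : ℝ) (hA : 0 ≤ A)
    (hV : ∀ m : ℕ, 1 ≤ m → ‖V ^ m‖ ≤ A ^ m / (Nat.factorial m : ℝ))
    (g : X) (T : X → X) (hT : ∀ f : X, T f = g + V f)
    (y : X) (hy : T y = y) :
    ∀ (p : X) (i : ℕ), 1 ≤ i →
      ‖p - y‖ ≤ (∑' j : ℕ, A ^ (i * j) / (Nat.factorial (i * j) : ℝ)) * ‖T^[i] p - p‖ :=
  stmt_11_general X V A hV g T hT y hy
end

section
/- Let X be a real (or complex) Banach space, let V : X → X be a continuous linear operator with ‖V^m‖ ≤ A^m / m! for every integer m ≥ 1 (A ≥ 0), let g ∈ X, and define T(f) = g + V f. Let ε ≥ 0, let i ≥ 1, and let p_0, p_1, …, p_i ∈ X satisfy ‖p_{k+1} − T(p_k)‖ ≤ ε for 0 ≤ k ≤ i−1. Then ‖p_i − T^i(p_0)‖ ≤ (Σ_{k=0}^{i−1} A^k/k!)·ε ≤ e^A·ε. -/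
/-!
Writing `T f = g + V f`, the map `T^[n]` is affine with linear part `V ^ n`, so the defect
`p n - T^[n] (p 0)` is exactly the sum over `k < n` of the local errors `p (k + 1) - T (p k)`
propagated through the remaining `n - 1 - k` steps by `V ^ (n - 1 - k)`. Bounding each term by
`‖V ^ m‖ ε ≤ A ^ m / m! · ε` gives a partial sum of the exponential series.
-/

open Finset

section AffineIterate

variable {R M : Type*} [Ring R] [AddCommGroup M] [Module R M] [TopologicalSpace M]
  {V : M →L[R] M} {g : M} {T : M → M}

theorem iterate_sub_iterate_of_eq_add (hT : ∀ x, T x = g + V x) (n : ℕ) (x y : M) :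
    T^[n] x - T^[n] y = (V ^ n) (x - y) := by
  induction n generalizing x y with
  | zero => simp
  | succ n ih =>
    have hstep : T x - T y = V (x - y) := by rw [hT, hT, map_sub]; abel
    rw [Function.iterate_succ_apply, Function.iterate_succ_apply, ih, hstep, pow_succ]
    rfl

theorem sub_iterate_eq_sum_of_eq_add (hT : ∀ x, T x = g + V x) (p : ℕ → M) (n : ℕ) :
    p n - T^[n] (p 0) = ∑ k ∈ range n, (V ^ (n - 1 - k)) (p (k + 1) - T (p k)) := by
  induction n generalizing p with
  | zero => simp
  | succ n ih =>
    calc p (n + 1) - T^[n + 1] (p 0)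
        = (p (n + 1) - T^[n] (p 1)) + (T^[n] (p 1) - T^[n] (T (p 0))) := by
          rw [Function.iterate_succ_apply]; abel
      _ = ∑ k ∈ range n, (V ^ (n - 1 - k)) (p (k + 2) - T (p (k + 1)))
            + (V ^ n) (p 1 - T (p 0)) := by
          rw [ih (fun k ↦ p (k + 1)), iterate_sub_iterate_of_eq_add hT]
      _ = ∑ k ∈ range (n + 1), (V ^ (n + 1 - 1 - k)) (p (k + 1) - T (p k)) := by
          rw [sum_range_succ']
          congr 1
          exact sum_congr rfl fun k _ ↦ by rw [show n + 1 - 1 - (k + 1) = n - 1 - k by omega]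

end AffineIterate

theorem norm_sub_iterate_le_of_eq_add {𝕜 X : Type*} [NontriviallyNormedField 𝕜]
    [NormedAddCommGroup X] [NormedSpace 𝕜 X] {V : X →L[𝕜] X} {g : X} {T : X → X}
    (hT : ∀ x, T x = g + V x) {c : ℕ → ℝ} (hV : ∀ m, ‖V ^ m‖ ≤ c m) {ε : ℝ} {n : ℕ}
    {p : ℕ → X} (hp : ∀ k < n, ‖p (k + 1) - T (p k)‖ ≤ ε) :
    ‖p n - T^[n] (p 0)‖ ≤ (∑ k ∈ range n, c k) * ε := by
  rw [sub_iterate_eq_sum_of_eq_add hT, ← sum_range_reflect c, sum_mul]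
  refine (norm_sum_le _ _).trans (sum_le_sum fun k hk ↦ ?_)
  calc ‖(V ^ (n - 1 - k)) (p (k + 1) - T (p k))‖
      ≤ ‖V ^ (n - 1 - k)‖ * ‖p (k + 1) - T (p k)‖ := (V ^ (n - 1 - k)).le_opNorm _
    _ ≤ c (n - 1 - k) * ε :=
      mul_le_mul (hV _) (hp k (mem_range.mp hk)) (norm_nonneg _) ((norm_nonneg _).trans (hV _))

theorem stmt_12_general (X : Type*) [NormedAddCommGroup X] [NormedSpace ℝ X]
    (V : X →L[ℝ] X) (A : ℝ) (hA : 0 ≤ A)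
    (hV : ∀ m : ℕ, 1 ≤ m → ‖V ^ m‖ ≤ A ^ m / (Nat.factorial m : ℝ))
    (g : X) (T : X → X) (hT : ∀ f : X, T f = g + V f)
    (ε : ℝ) (hε : 0 ≤ ε) (i : ℕ) (p : ℕ → X)
    (hp : ∀ k : ℕ, k ≤ i - 1 → ‖p (k + 1) - T (p k)‖ ≤ ε) :
    ‖p i - T^[i] (p 0)‖ ≤ (∑ k ∈ Finset.range i, A ^ k / (Nat.factorial k : ℝ)) * ε ∧
    (∑ k ∈ Finset.range i, A ^ k / (Nat.factorial k : ℝ)) * ε ≤ Real.exp A * ε := by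
  have hV' : ∀ m, ‖V ^ m‖ ≤ A ^ m / (Nat.factorial m : ℝ) := by
    rintro (_ | m)
    · rw [pow_zero, pow_zero, Nat.factorial_zero, Nat.cast_one, div_one]
      exact ContinuousLinearMap.norm_id_le
    · exact hV _ m.succ_pos
  exact ⟨norm_sub_iterate_le_of_eq_add hT hV' fun k hk ↦ hp k (by omega),
    mul_le_mul_of_nonneg_right (Real.sum_le_exp_of_nonneg hA i) hε⟩

/-- accumulated error of approximate iteration: if
`‖V^m‖ ≤ A^m/m!` for all `m ≥ 1`, `T(f) = g + V f`, and
`‖p_{k+1} − T(p_k)‖ ≤ ε` for `0 ≤ k ≤ i−1`, then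
`‖p_i − T^i(p_0)‖ ≤ (Σ_{k=0}^{i−1} A^k/k!)·ε ≤ e^A·ε`. -/
theorem stmt_12 (X : Type*) [NormedAddCommGroup X] [NormedSpace ℝ X] [CompleteSpace X]
    (V : X →L[ℝ] X) (A : ℝ) (hA : 0 ≤ A)
    (hV : ∀ m : ℕ, 1 ≤ m → ‖V ^ m‖ ≤ A ^ m / (Nat.factorial m : ℝ))
    (g : X) (T : X → X) (hT : ∀ f : X, T f = g + V f)
    (ε : ℝ) (hε : 0 ≤ ε) (i : ℕ) (hi : 1 ≤ i) (p : ℕ → X)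
    (hp : ∀ k : ℕ, k ≤ i - 1 → ‖p (k + 1) - T (p k)‖ ≤ ε) :
    ‖p i - T^[i] (p 0)‖ ≤ (∑ k ∈ Finset.range i, A ^ k / (Nat.factorial k : ℝ)) * ε ∧
    (∑ k ∈ Finset.range i, A ^ k / (Nat.factorial k : ℝ)) * ε ≤ Real.exp A * ε :=
  stmt_12_general X V A hA hV g T hT ε hε i p hp
end

section
/- Let X be a real (or complex) Banach space, let V : X → X be a continuous linear operator with ‖V^m‖ ≤ A^m / m! for every integer m ≥ 1 (A ≥ 0), let g ∈ X, define T(f) = g + V f, and suppose y ∈ X satisfies T(y) = y. Let ε ≥ 0, i ≥ 1, and let p_0 = p, p_1, …, p_i ∈ X satisfy ‖p_{k+1} − T(p_k)‖ ≤ ε for 0 ≤ k ≤ i−1. Then for any δ ≥ ‖p − p_i‖, ‖p − y‖ ≤ γ_i·(δ + e^A·ε), where γ_i = Σ_{j=0}^{∞} A^{ij}/(ij)!. -/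
/-!
Let `u = p - y` and `d = p - T^i p`. Since `T` is affine with linear part `V` and fixes `y`,
`u = d + V^i u`, and unrolling gives `u = ∑_{j<N} V^{ij} d + V^{iN} u`. The bounds
`‖V^{ij}‖ ≤ A^{ij}/(ij)!` make the last term vanish as `N → ∞`, so `‖u‖ ≤ γ_i ‖d‖`.
For `d`, the defect of `p_i` against the exact iterate `T^i p` accumulates as
`‖p_i - T^i p‖ ≤ ∑_{k<i} ‖V^k‖ ε ≤ e^A ε`, and `‖p - p_i‖ ≤ δ` does the rest.
-/

open Finset Filter Topology

section AffineIteration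

variable {𝕜 E : Type*} [NontriviallyNormedField 𝕜] [NormedAddCommGroup E] [NormedSpace 𝕜 E]
  {V : E →L[𝕜] E} {g : E} {T : E → E}

theorem iterate_sub_iterate_of_affine (hT : ∀ f, T f = g + V f) (a b : E) (n : ℕ) :
    T^[n] a - T^[n] b = (V ^ n) (a - b) := by
  induction n with
  | zero => simp
  | succ n ih =>
    rw [Function.iterate_succ_apply', Function.iterate_succ_apply', hT, hT,
      add_sub_add_left_eq_sub, ← map_sub, ih, pow_succ', mul_apply_eq_comp]

theorem norm_sub_iterate_le_of_affine (hT : ∀ f, T f = g + V f) {ε : ℝ} :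
    ∀ (n : ℕ) (p : ℕ → E), (∀ k < n, ‖p (k + 1) - T (p k)‖ ≤ ε) →
      ‖p n - T^[n] (p 0)‖ ≤ ∑ k ∈ range n, ‖V ^ k‖ * ε
  | 0, p, _ => by simp
  | n + 1, p, hp => by
    -- Peeling off the first step rather than the last keeps `‖V ^ k‖` instead of `‖V‖ ^ k`.
    have hshift := norm_sub_iterate_le_of_affine hT n (fun k => p (k + 1))
      fun k hk => hp (k + 1) (by omega)
    have hfirst : ‖(V ^ n) (p 1 - T (p 0))‖ ≤ ‖V ^ n‖ * ε :=
      ((V ^ n).le_opNorm _).trans (by gcongr; exact hp 0 (by omega))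
    calc ‖p (n + 1) - T^[n + 1] (p 0)‖
        = ‖(p (n + 1) - T^[n] (p 1)) + (V ^ n) (p 1 - T (p 0))‖ := by
          rw [Function.iterate_succ_apply, ← iterate_sub_iterate_of_affine hT]; abel_nf
      _ ≤ ∑ k ∈ range n, ‖V ^ k‖ * ε + ‖V ^ n‖ * ε :=
          (norm_add_le _ _).trans (add_le_add hshift hfirst)
      _ = ∑ k ∈ range (n + 1), ‖V ^ k‖ * ε := (sum_range_succ _ _).symm

end AffineIteration

section NeumannBound

variable {𝕜 E : Type*} [NontriviallyNormedField 𝕜] [NormedAddCommGroup E] [NormedSpace 𝕜 E]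
  {W : E →L[𝕜] E} {u d : E}

theorem eq_sum_pow_apply_add_pow_apply (h : u = d + W u) (N : ℕ) :
    u = ∑ j ∈ range N, (W ^ j) d + (W ^ N) u := by
  induction N with
  | zero => simp
  | succ N ih =>
    conv_lhs => rw [ih, h, map_add]
    rw [sum_range_succ, pow_succ, mul_apply_eq_comp, add_assoc]

theorem norm_le_tsum_mul_of_eq_add_apply {c : ℕ → ℝ} (hc : Summable c)
    (hW : ∀ j, ‖W ^ j‖ ≤ c j) (h : u = d + W u) : ‖u‖ ≤ (∑' j, c j) * ‖d‖ := by
  have hN : ∀ N, ‖u‖ ≤ (∑ j ∈ range N, c j) * ‖d‖ + c N * ‖u‖ := fun N =>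
    calc ‖u‖ = ‖∑ j ∈ range N, (W ^ j) d + (W ^ N) u‖ := by
          rw [← eq_sum_pow_apply_add_pow_apply h N]
      _ ≤ ∑ j ∈ range N, ‖(W ^ j) d‖ + ‖(W ^ N) u‖ :=
          (norm_add_le _ _).trans (add_le_add_left (norm_sum_le _ _) _)
      _ ≤ ∑ j ∈ range N, c j * ‖d‖ + c N * ‖u‖ := by
          gcongr with j
          · exact ((W ^ j).le_opNorm d).trans (by gcongr; exact hW j)
          · exact ((W ^ N).le_opNorm u).trans (by gcongr; exact hW N)
      _ = _ := by rw [sum_mul]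
  have hlim : Tendsto (fun N => (∑ j ∈ range N, c j) * ‖d‖ + c N * ‖u‖) atTop
      (𝓝 ((∑' j, c j) * ‖d‖)) := by
    simpa using (hc.hasSum.tendsto_sum_nat.mul_const ‖d‖).add
      (hc.tendsto_atTop_zero.mul_const ‖u‖)
  exact ge_of_tendsto' hlim hN

end NeumannBound

section FactorialDecay

variable {𝕜 E : Type*} [NontriviallyNormedField 𝕜] [NormedAddCommGroup E] [NormedSpace 𝕜 E]
  {V : E →L[𝕜] E} {A : ℝ}

theorem norm_pow_le_pow_div_factorial
    (hV : ∀ m : ℕ, 1 ≤ m → ‖V ^ m‖ ≤ A ^ m / (Nat.factorial m : ℝ)) (m : ℕ) :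
    ‖V ^ m‖ ≤ A ^ m / (Nat.factorial m : ℝ) := by
  rcases Nat.eq_zero_or_pos m with rfl | hm
  · simpa [ContinuousLinearMap.one_def] using ContinuousLinearMap.norm_id_le
  · exact hV m hm

theorem summable_pow_div_factorial_comp_mul (A : ℝ) {i : ℕ} (hi : 0 < i) :
    Summable fun j : ℕ => A ^ (i * j) / (Nat.factorial (i * j) : ℝ) :=
  (Real.summable_pow_div_factorial A).comp_injective fun _ _ h => Nat.eq_of_mul_eq_mul_left hi h

theorem norm_sub_fixedPoint_le {g : E} {T : E → E} (hT : ∀ f, T f = g + V f) {y : E}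
    (hy : T y = y) (hV : ∀ m, ‖V ^ m‖ ≤ A ^ m / (Nat.factorial m : ℝ)) {i : ℕ} (hi : 0 < i)
    (x : E) :
    ‖x - y‖ ≤ (∑' j : ℕ, A ^ (i * j) / (Nat.factorial (i * j) : ℝ)) * ‖x - T^[i] x‖ := by
  refine norm_le_tsum_mul_of_eq_add_apply (W := V ^ i)
    (summable_pow_div_factorial_comp_mul A hi) (fun j => by rw [← pow_mul]; exact hV _) ?_
  rw [← iterate_sub_iterate_of_affine hT, (Function.IsFixedPt.iterate hy i).eq]
  abel

theorem norm_sub_iterate_le_exp_mul (hA : 0 ≤ A)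
    (hV : ∀ m, ‖V ^ m‖ ≤ A ^ m / (Nat.factorial m : ℝ)) {g : E} {T : E → E}
    (hT : ∀ f, T f = g + V f) {ε : ℝ} (hε : 0 ≤ ε) {n : ℕ} {p : ℕ → E}
    (hp : ∀ k < n, ‖p (k + 1) - T (p k)‖ ≤ ε) :
    ‖p n - T^[n] (p 0)‖ ≤ Real.exp A * ε :=
  calc ‖p n - T^[n] (p 0)‖ ≤ ∑ k ∈ range n, ‖V ^ k‖ * ε := norm_sub_iterate_le_of_affine hT n p hp
    _ ≤ (∑ k ∈ range n, A ^ k / (Nat.factorial k : ℝ)) * ε := by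
        rw [sum_mul]; gcongr with k; exact hV k
    _ ≤ Real.exp A * ε := by gcongr; exact Real.sum_le_exp_of_nonneg hA n

end FactorialDecay

theorem stmt_13_general (X : Type*) [NormedAddCommGroup X] [NormedSpace ℝ X]
    (V : X →L[ℝ] X) (A : ℝ) (hA : 0 ≤ A)
    (hV : ∀ m : ℕ, 1 ≤ m → ‖V ^ m‖ ≤ A ^ m / (Nat.factorial m : ℝ))
    (g : X) (T : X → X) (hT : ∀ f : X, T f = g + V f)
    (y : X) (hy : T y = y)
    (ε : ℝ) (hε : 0 ≤ ε) (i : ℕ) (hi : 1 ≤ i) (p : ℕ → X)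
    (hp : ∀ k : ℕ, k ≤ i - 1 → ‖p (k + 1) - T (p k)‖ ≤ ε)
    (δ : ℝ) (hδ : ‖p 0 - p i‖ ≤ δ) :
    ‖p 0 - y‖ ≤
      (∑' j : ℕ, A ^ (i * j) / (Nat.factorial (i * j) : ℝ)) * (δ + Real.exp A * ε) := by
  have hVm := norm_pow_le_pow_div_factorial hV
  have hγ : 0 ≤ ∑' j : ℕ, A ^ (i * j) / (Nat.factorial (i * j) : ℝ) :=
    tsum_nonneg fun j => by positivity
  have hdefect : ‖p 0 - T^[i] (p 0)‖ ≤ δ + Real.exp A * ε :=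
    calc ‖p 0 - T^[i] (p 0)‖ ≤ ‖p 0 - p i‖ + ‖p i - T^[i] (p 0)‖ :=
          norm_sub_le_norm_sub_add_norm_sub _ _ _
      _ ≤ δ + Real.exp A * ε :=
          add_le_add hδ (norm_sub_iterate_le_exp_mul hA hVm hT hε fun k hk => hp k (by omega))
  exact (norm_sub_fixedPoint_le hT hy hVm hi (p 0)).trans (mul_le_mul_of_nonneg_left hdefect hγ)

/-- correctness of the validation bound, Theorem 7.5: with
`‖V^m‖ ≤ A^m/m!`, `T(f) = g + V f`, `T(y) = y`, and approximate iterates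
`‖p_{k+1} − T(p_k)‖ ≤ ε` starting from `p_0 = p`, one has, for any
`δ ≥ ‖p − p_i‖`, the bound `‖p − y‖ ≤ γ_i·(δ + e^A·ε)` where
`γ_i = Σ_j A^{ij}/(ij)!`. -/
theorem stmt_13 (X : Type*) [NormedAddCommGroup X] [NormedSpace ℝ X] [CompleteSpace X]
    (V : X →L[ℝ] X) (A : ℝ) (hA : 0 ≤ A)
    (hV : ∀ m : ℕ, 1 ≤ m → ‖V ^ m‖ ≤ A ^ m / (Nat.factorial m : ℝ))
    (g : X) (T : X → X) (hT : ∀ f : X, T f = g + V f)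
    (y : X) (hy : T y = y)
    (ε : ℝ) (hε : 0 ≤ ε) (i : ℕ) (hi : 1 ≤ i) (p : ℕ → X)
    (hp : ∀ k : ℕ, k ≤ i - 1 → ‖p (k + 1) - T (p k)‖ ≤ ε)
    (δ : ℝ) (hδ : ‖p 0 - p i‖ ≤ δ) :
    ‖p 0 - y‖ ≤
      (∑' j : ℕ, A ^ (i * j) / (Nat.factorial (i * j) : ℝ)) * (δ + Real.exp A * ε) :=
  stmt_13_general X V A hA hV g T hT y hy ε hε i hi p hp δ hδ
end

section
/- Let X be a real (or complex) Banach space, let V : X → X be a continuous linear operator with ‖V^m‖ ≤ A^m/m! for all m ≥ 1 (A ≥ 0), let g ∈ X, define T(f) = g + V f, and suppose y ∈ X satisfies T(y) = y. Let ε ≥ 0, i ≥ 1, and let p_0 = p, p_1, …, p_i ∈ X satisfy ‖p_{k+1} − T(p_k)‖ ≤ ε for 0 ≤ k ≤ i−1. Then ‖p − p_i‖ ≤ (1 + ‖V^i‖)·‖p − y‖ + e^A·ε. In particular, if moreover ‖V^i‖ ≤ 1/2, then ‖p − y‖ ≥ (2/3)·(‖p − p_i‖ − e^A·ε). -/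
/-! If `T` is affine with linear part `V`, then `T^[n] p₀ - y = V^n (p₀ - y)` for a fixed point `y`,
while `T^[n] p₀` differs from the `n`-th approximate iterate `pₙ` by at most `ε ∑_{m<n} ‖V^m‖`:
the defect committed at step `k` is propagated by `V^(n-k-1)`. The hypothesis `‖V^m‖ ≤ A^m/m!`
bounds that sum by `e^A`, and the triangle inequality through `y` and `T^[n] p₀` gives the bound
on `‖p₀ - pₙ‖`; when `‖V^n‖ ≤ 1/2` it is read backwards as a lower bound on `‖p₀ - y‖`. -/

open Finset

section AffineIterates

variable {𝕜 X : Type*} [NontriviallyNormedField 𝕜] [NormedAddCommGroup X] [NormedSpace 𝕜 X]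
  {V : X →L[𝕜] X} {T : X → X}

theorem iterate_sub_iterate_eq_pow_apply (hT : ∀ a b, T a - T b = V (a - b)) (n : ℕ) (a b : X) :
    T^[n] a - T^[n] b = (V ^ n) (a - b) := by
  induction n generalizing a b with
  | zero => simp
  | succ n ih =>
    rw [Function.iterate_succ_apply, Function.iterate_succ_apply, ih, hT, pow_succ]
    rfl

theorem norm_iterate_sub_le_of_approx_iterates (hT : ∀ a b, T a - T b = V (a - b)) {ε : ℝ}
    (n : ℕ) (p : ℕ → X) (hp : ∀ k < n, ‖p (k + 1) - T (p k)‖ ≤ ε) :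
    ‖T^[n] (p 0) - p n‖ ≤ ε * ∑ m ∈ range n, ‖V ^ m‖ := by
  induction n generalizing p with
  | zero => simp
  | succ n ih =>
    have hpropagated : ‖T^[n] (T (p 0)) - T^[n] (p 1)‖ ≤ ‖V ^ n‖ * ε := by
      rw [iterate_sub_iterate_eq_pow_apply hT, ← norm_neg, ← map_neg, neg_sub]
      exact (V ^ n).le_of_opNorm_le_of_le le_rfl (hp 0 n.succ_pos)
    have htail : ‖T^[n] (p 1) - p (n + 1)‖ ≤ ε * ∑ m ∈ range n, ‖V ^ m‖ :=
      ih (fun k => p (k + 1)) fun k hk => hp (k + 1) (by omega)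
    calc ‖T^[n + 1] (p 0) - p (n + 1)‖
        = ‖(T^[n] (T (p 0)) - T^[n] (p 1)) + (T^[n] (p 1) - p (n + 1))‖ := by
          rw [Function.iterate_succ_apply, sub_add_sub_cancel]
      _ ≤ ‖V ^ n‖ * ε + ε * ∑ m ∈ range n, ‖V ^ m‖ :=
          (norm_add_le _ _).trans (add_le_add hpropagated htail)
      _ = ε * ∑ m ∈ range (n + 1), ‖V ^ m‖ := by rw [sum_range_succ]; ring

theorem norm_sub_approx_iterate_le (hT : ∀ a b, T a - T b = V (a - b)) {y : X} (hy : T y = y)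
    {ε : ℝ} (n : ℕ) (p : ℕ → X) (hp : ∀ k < n, ‖p (k + 1) - T (p k)‖ ≤ ε) :
    ‖p 0 - p n‖ ≤ (1 + ‖V ^ n‖) * ‖p 0 - y‖ + ε * ∑ m ∈ range n, ‖V ^ m‖ := by
  have hcontract : ‖y - T^[n] (p 0)‖ ≤ ‖V ^ n‖ * ‖p 0 - y‖ := by
    have hfixed : y - T^[n] (p 0) = (V ^ n) (y - p 0) := by
      rw [← iterate_sub_iterate_eq_pow_apply hT, Function.iterate_fixed hy]
    rw [hfixed, norm_sub_rev (p 0)]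
    exact (V ^ n).le_opNorm _
  calc ‖p 0 - p n‖
      = ‖(p 0 - y) + (y - T^[n] (p 0)) + (T^[n] (p 0) - p n)‖ := by
        rw [sub_add_sub_cancel, sub_add_sub_cancel]
    _ ≤ ‖p 0 - y‖ + ‖V ^ n‖ * ‖p 0 - y‖ + ε * ∑ m ∈ range n, ‖V ^ m‖ :=
        norm_add₃_le.trans (add_le_add (add_le_add le_rfl hcontract)
          (norm_iterate_sub_le_of_approx_iterates hT n p hp))
    _ = (1 + ‖V ^ n‖) * ‖p 0 - y‖ + ε * ∑ m ∈ range n, ‖V ^ m‖ := by ring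

end AffineIterates

theorem sum_range_norm_pow_le_exp {X : Type*} [NormedAddCommGroup X] [NormedSpace ℝ X]
    {V : X →L[ℝ] X} {A : ℝ} (hA : 0 ≤ A)
    (hV : ∀ m : ℕ, 1 ≤ m → ‖V ^ m‖ ≤ A ^ m / (Nat.factorial m : ℝ)) (n : ℕ) :
    ∑ m ∈ range n, ‖V ^ m‖ ≤ Real.exp A := by
  refine le_trans (sum_le_sum fun m _ => ?_) (Real.sum_le_exp_of_nonneg hA n)
  rcases m.eq_zero_or_pos with rfl | hm
  · rw [pow_zero, pow_zero, Nat.factorial_zero, Nat.cast_one, div_one]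
    exact ContinuousLinearMap.norm_id_le
  · exact hV m hm

theorem stmt_14_general (X : Type*) [NormedAddCommGroup X] [NormedSpace ℝ X]
    (V : X →L[ℝ] X) (A : ℝ) (hA : 0 ≤ A)
    (hV : ∀ m : ℕ, 1 ≤ m → ‖V ^ m‖ ≤ A ^ m / (Nat.factorial m : ℝ))
    (g : X) (T : X → X) (hT : ∀ f : X, T f = g + V f)
    (y : X) (hy : T y = y)
    (ε : ℝ) (hε : 0 ≤ ε) (i : ℕ) (p : ℕ → X)
    (hp : ∀ k : ℕ, k ≤ i - 1 → ‖p (k + 1) - T (p k)‖ ≤ ε) :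
    ‖p 0 - p i‖ ≤ (1 + ‖V ^ i‖) * ‖p 0 - y‖ + Real.exp A * ε ∧
    (‖V ^ i‖ ≤ 1 / 2 →
      (2 / 3 : ℝ) * (‖p 0 - p i‖ - Real.exp A * ε) ≤ ‖p 0 - y‖) := by
  have hTsub : ∀ a b, T a - T b = V (a - b) := fun a b => by
    rw [hT, hT, map_sub, add_sub_add_left_eq_sub]
  have hbound : ‖p 0 - p i‖ ≤ (1 + ‖V ^ i‖) * ‖p 0 - y‖ + Real.exp A * ε := by
    refine (norm_sub_approx_iterate_le hTsub hy i p fun k hk => hp k (by omega)).trans ?_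
    rw [mul_comm ε]
    gcongr
    exact sum_range_norm_pow_le_exp hA hV i
  refine ⟨hbound, fun hVi => ?_⟩
  nlinarith [norm_nonneg (p 0 - y)]

/-- tightness of the validation bound: with `‖V^m‖ ≤ A^m/m!`,
`T(f) = g + V f`, `T(y) = y`, and approximate iterates
`‖p_{k+1} − T(p_k)‖ ≤ ε` starting from `p_0 = p`, one has
`‖p − p_i‖ ≤ (1 + ‖V^i‖)·‖p − y‖ + e^A·ε`; in particular, if `‖V^i‖ ≤ 1/2`,
then `‖p − y‖ ≥ (2/3)·(‖p − p_i‖ − e^A·ε)`. -/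
theorem stmt_14 (X : Type*) [NormedAddCommGroup X] [NormedSpace ℝ X] [CompleteSpace X]
    (V : X →L[ℝ] X) (A : ℝ) (hA : 0 ≤ A)
    (hV : ∀ m : ℕ, 1 ≤ m → ‖V ^ m‖ ≤ A ^ m / (Nat.factorial m : ℝ))
    (g : X) (T : X → X) (hT : ∀ f : X, T f = g + V f)
    (y : X) (hy : T y = y)
    (ε : ℝ) (hε : 0 ≤ ε) (i : ℕ) (hi : 1 ≤ i) (p : ℕ → X)
    (hp : ∀ k : ℕ, k ≤ i - 1 → ‖p (k + 1) - T (p k)‖ ≤ ε) :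
    ‖p 0 - p i‖ ≤ (1 + ‖V ^ i‖) * ‖p 0 - y‖ + Real.exp A * ε ∧
    (‖V ^ i‖ ≤ 1 / 2 →
      (2 / 3 : ℝ) * (‖p 0 - p i‖ - Real.exp A * ε) ≤ ‖p 0 - y‖) :=
  stmt_14_general X V A hA hV g T hT y hy ε hε i p hp
end

section
/- Let d ≥ 0 and let (c_n)_{n=−d}^{d} be real numbers with c_{−n} = c_n for all n. Let f(x) = Σ_{n=−d}^{d} c_n·T_n(x), where T_n is the Chebyshev polynomial of the first kind (T_{−n} = T_n). Set M = Σ_{n=−d}^{d} |c_n| and ‖f‖_∞ = sup_{x∈[−1,1]} |f(x)|. Then ‖f‖_∞ ≤ M ≤ √(2d+1)·‖f‖_∞. -/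
/-!
Since `|T_n| ≤ 1` on `[-1, 1]`, the triangle inequality gives `‖f‖_∞ ≤ M`. For the other bound,
the `T_n` are orthogonal for the Chebyshev measure `dx / √(1 - x²)`, of total mass `π`, so with
symmetric coefficients `∫ f² = π Σ c_n²`; bounding `f²` by `‖f‖_∞²` gives `Σ c_n² ≤ ‖f‖_∞²`, and
Cauchy–Schwarz over the `2d + 1` indices gives `M ≤ √(2d + 1) · (Σ c_n²)^{1/2}`.
-/

open Polynomial Finset MeasureTheory Real

namespace Polynomial.Chebyshev

theorem integral_eval_T_real_measureT (k : ℤ) :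
    ∫ x, (T ℝ k).eval x ∂measureT = if k = 0 then π else 0 := by
  split_ifs with hk
  · rw [hk]; exact integral_eval_T_real_measureT_zero
  · exact integral_eval_T_real_measureT_of_ne_zero hk

theorem integral_eval_T_real_mul_eval_T_real_measureT_eq_ite (m n : ℤ) :
    ∫ x, (T ℝ m).eval x * (T ℝ n).eval x ∂measureT =
      (if n = -m then π / 2 else 0) + (if n = m then π / 2 else 0) := by
  rw [integral_eval_T_real_mul_eval_T_real_measureT, integral_eval_T_real_measureT,
    integral_eval_T_real_measureT]
  have h₁ : m + n = 0 ↔ n = -m := by omega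
  have h₂ : m - n = 0 ↔ n = m := by omega
  simp only [h₁, h₂]
  split_ifs <;> ring

theorem integral_measureT_le_of_forall_le {g : ℝ → ℝ} {C : ℝ}
    (hg : ContinuousOn g (Set.Icc (-1) 1)) (hgC : ∀ x ∈ Set.Icc (-1 : ℝ) 1, g x ≤ C) :
    ∫ x, g x ∂measureT ≤ π * C := by
  have hsupp : ∀ᵐ x ∂measureT, x ∈ Set.Ioc (-1 : ℝ) 1 := ae_restrict_mem measurableSet_Ioc
  calc ∫ x, g x ∂measureT ≤ ∫ _, C ∂measureT :=
        integral_mono_ae (integrable_measureT hg) (integrable_measureT continuousOn_const)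
          (hsupp.mono fun x hx => hgC x (Set.Ioc_subset_Icc_self hx))
    _ = C * ∫ x, (T ℝ 0).eval x ∂measureT := by simp [mul_comm]
    _ = π * C := by rw [integral_eval_T_real_measureT_zero, mul_comm]

theorem integral_sq_sum_mul_eval_T_real_measureT {s : Finset ℤ} (hs : ∀ n ∈ s, -n ∈ s)
    {c : ℤ → ℝ} (hc : ∀ n, c (-n) = c n) :
    ∫ x, (∑ n ∈ s, c n * (T ℝ n).eval x) ^ 2 ∂measureT = π * ∑ n ∈ s, c n ^ 2 := by
  have hint (m n : ℤ) : Integrable (fun x => (T ℝ m).eval x * (T ℝ n).eval x) measureT :=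
    integrable_measureT (by fun_prop)
  calc ∫ x, (∑ n ∈ s, c n * (T ℝ n).eval x) ^ 2 ∂measureT
      = ∫ x, ∑ m ∈ s, ∑ n ∈ s, c m * c n * ((T ℝ m).eval x * (T ℝ n).eval x) ∂measureT := by
        simp_rw [sq, sum_mul_sum, mul_mul_mul_comm]
    _ = ∑ m ∈ s, ∑ n ∈ s, c m * c n * ∫ x, (T ℝ m).eval x * (T ℝ n).eval x ∂measureT := by
        rw [integral_finsetSum _ fun m _ => integrable_finsetSum _ fun n _ => (hint m n).const_mul _]
        simp_rw [integral_finsetSum _ fun n _ => (hint _ n).const_mul _, integral_const_mul]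
    _ = ∑ m ∈ s, (c m * c (-m) * (π / 2) + c m * c m * (π / 2)) := by
        refine sum_congr rfl fun m hm => ?_
        simp only [integral_eval_T_real_mul_eval_T_real_measureT_eq_ite, mul_add, mul_ite,
          mul_zero, sum_add_distrib, sum_ite_eq', hs m hm, hm, if_true]
    _ = π * ∑ n ∈ s, c n ^ 2 := by
        rw [mul_sum]
        exact sum_congr rfl fun m _ => by rw [hc]; ring

theorem abs_sum_mul_eval_T_real_le (s : Finset ℤ) (c : ℤ → ℝ) {x : ℝ} (hx : |x| ≤ 1) :
    |∑ n ∈ s, c n * (T ℝ n).eval x| ≤ ∑ n ∈ s, |c n| :=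
  (abs_sum_le_sum_abs _ _).trans <| sum_le_sum fun n _ => by
    rw [abs_mul]
    exact mul_le_of_le_one_right (abs_nonneg _) (abs_eval_T_real_le_one n hx)

theorem sum_sq_le_sq_of_abs_sum_mul_eval_T_real_le {s : Finset ℤ} (hs : ∀ n ∈ s, -n ∈ s)
    {c : ℤ → ℝ} (hc : ∀ n, c (-n) = c n) {S : ℝ}
    (hS : ∀ x ∈ Set.Icc (-1 : ℝ) 1, |∑ n ∈ s, c n * (T ℝ n).eval x| ≤ S) :
    ∑ n ∈ s, c n ^ 2 ≤ S ^ 2 := by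
  have hL2 : π * ∑ n ∈ s, c n ^ 2 ≤ π * S ^ 2 := by
    rw [← integral_sq_sum_mul_eval_T_real_measureT hs hc]
    refine integral_measureT_le_of_forall_le (by fun_prop) fun x hx => ?_
    rw [← sq_abs]
    exact pow_le_pow_left₀ (abs_nonneg _) (hS x hx) 2
  exact le_of_mul_le_mul_left hL2 pi_pos

end Polynomial.Chebyshev

theorem Finset.sum_abs_le_sqrt_card_mul_sqrt_sum_sq {ι : Type*} (s : Finset ι) (a : ι → ℝ) :
    ∑ i ∈ s, |a i| ≤ √(#s : ℝ) * √(∑ i ∈ s, a i ^ 2) := by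
  rw [← Real.sqrt_mul (Nat.cast_nonneg _), Real.le_sqrt (by positivity) (by positivity)]
  simpa only [sq_abs] using sq_sum_le_card_mul_sum_sq (s := s) (f := fun i => |a i|)

open Polynomial.Chebyshev

/-- Lemma 7.4: for a symmetric Chebyshev-form polynomial
`f = Σ_{n=−d}^{d} c_n·T_n` with `c_{−n} = c_n`, the quantity
`M = Σ_{n=−d}^{d} |c_n|` satisfies `‖f‖_∞ ≤ M ≤ √(2d+1)·‖f‖_∞`. -/
theorem stmt_15 (d : ℕ) (c : ℤ → ℝ) (hc : ∀ n : ℤ, c (-n) = c n) :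
    (sSup ((fun x : ℝ =>
        |∑ n ∈ Finset.Icc (-(d : ℤ)) (d : ℤ),
          c n * (Polynomial.Chebyshev.T ℝ n).eval x|) '' Set.Icc (-1 : ℝ) 1) ≤
      ∑ n ∈ Finset.Icc (-(d : ℤ)) (d : ℤ), |c n|) ∧
    (∑ n ∈ Finset.Icc (-(d : ℤ)) (d : ℤ), |c n| ≤
      Real.sqrt (2 * d + 1) *
        sSup ((fun x : ℝ =>
          |∑ n ∈ Finset.Icc (-(d : ℤ)) (d : ℤ),
            c n * (Polynomial.Chebyshev.T ℝ n).eval x|) '' Set.Icc (-1 : ℝ) 1)) := by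
  set I := Finset.Icc (-(d : ℤ)) d with hI
  set F := fun x : ℝ => |∑ n ∈ I, c n * (T ℝ n).eval x|
  have hF_le : ∀ x ∈ Set.Icc (-1 : ℝ) 1, F x ≤ ∑ n ∈ I, |c n| := fun x hx =>
    abs_sum_mul_eval_T_real_le I c (abs_le.2 hx)
  set S := sSup (F '' Set.Icc (-1) 1)
  have hF_le_S : ∀ x ∈ Set.Icc (-1 : ℝ) 1, F x ≤ S := fun x hx =>
    le_csSup ⟨_, Set.forall_mem_image.2 hF_le⟩ (Set.mem_image_of_mem F hx)
  have hS : 0 ≤ S := (abs_nonneg _).trans (hF_le_S 1 (by norm_num))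
  have hI_neg : ∀ n ∈ I, -n ∈ I := fun n hn => by simp only [hI, mem_Icc] at hn ⊢; omega
  have hI_card : (#I : ℝ) = 2 * d + 1 := by
    rw [hI, Int.card_Icc, show (d + 1 - -d : ℤ).toNat = 2 * d + 1 by omega]
    push_cast; ring
  refine ⟨Real.sSup_le (Set.forall_mem_image.2 hF_le) (sum_nonneg fun n _ => abs_nonneg _), ?_⟩
  calc ∑ n ∈ I, |c n| ≤ √(#I : ℝ) * √(∑ n ∈ I, c n ^ 2) :=
        sum_abs_le_sqrt_card_mul_sqrt_sum_sq I c
    _ ≤ √(2 * d + 1) * S := by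
        rw [hI_card]
        gcongr
        exact (Real.sqrt_le_sqrt
          (sum_sq_le_sq_of_abs_sum_mul_eval_T_real_le hI_neg hc hF_le_S)).trans_eq
          (Real.sqrt_sq hS)
end
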